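/- The ℚ-algebra homomorphism P → P′/(g_{q+1},…,g_{p+q−1}) sending e_i to the class of e_i for 2 ≤ i ≤ p and sending f_j to the class of g_j for 2 ≤ j ≤ q annihilates the ideal I_O and induces a ring isomorphism P/I_O ≅ P′/(g_{q+1},…,g_{p+q−1}). -/

import Mathlib

/-!
Differentiating `G ^ p = E ^ q` gives `p G' E = q E' G`, i.e. `∑_{i+j=n} (p i - q j) g_i e_j = 0`
for every `n`. As `e_0 = 1` and `e_j = 0` for `j = 1` and `j > p`, this yields `g_1 = 0`, and for
`n ≥ p + q` it expresses `p n g_n` through the `g_i` with `q < i < n`: the only other candidate,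
`(i, j) = (q, p)`, has coefficient `p q - q p = 0`. Hence every `g_n` with `n > q` lies in
`(g_{q+1}, …, g_{p+q-1})`, so `f_j ↦ g_j` maps `F` to `G` and kills `I_O`.

Conversely, in `P/I_O` the images of `G` and `F` are both `p`-th roots of `E^q` with constant
coefficient `1`, hence equal, so `e_i ↦ e_i` induces a left inverse
`P′/(g_{q+1}, …, g_{p+q-1}) → P/I_O`.
-/

open MvPolynomial

/-- The index set `{i : 2 ≤ i ≤ p}` for the variables `e₂, …, e_p`. -/
abbrev EIdx (p : ℕ) := {i : ℕ // 2 ≤ i ∧ i ≤ p}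

/-- The variable set of `P = ℚ[e₂,…,e_p, f₂,…,f_q]`. -/
abbrev EFVar (p q : ℕ) := EIdx p ⊕ EIdx q

/-- The power series `E(w) = 1 + e₂w² + ⋯ + e_p wᵖ` in `P⟦w⟧`. -/
noncomputable def Eser (p q : ℕ) : PowerSeries (MvPolynomial (EFVar p q) ℚ) :=
  PowerSeries.mk fun n =>
    if n = 0 then 1 else if h : 2 ≤ n ∧ n ≤ p then X (Sum.inl ⟨n, h⟩) else 0

/-- The power series `F(w) = 1 + f₂w² + ⋯ + f_q w^q` in `P⟦w⟧`. -/
noncomputable def Fser (p q : ℕ) : PowerSeries (MvPolynomial (EFVar p q) ℚ) :=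
  PowerSeries.mk fun n =>
    if n = 0 then 1 else if h : 2 ≤ n ∧ n ≤ q then X (Sum.inr ⟨n, h⟩) else 0

/-- The ideal `I_O ⊆ P` generated by all coefficients of `E(w)^q − F(w)^p`. -/
noncomputable def IdealO (p q : ℕ) : Ideal (MvPolynomial (EFVar p q) ℚ) :=
  Ideal.span (Set.range fun n : ℕ =>
    PowerSeries.coeff (R := MvPolynomial (EFVar p q) ℚ) n (Eser p q ^ q - Fser p q ^ p))

/-- The power series `E(w) = 1 + e₂w² + ⋯ + e_p wᵖ` in `P′⟦w⟧`, `P′ = ℚ[e₂,…,e_p]`. -/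
noncomputable def Eser' (p : ℕ) : PowerSeries (MvPolynomial (EIdx p) ℚ) :=
  PowerSeries.mk fun n =>
    if n = 0 then 1 else if h : 2 ≤ n ∧ n ≤ p then X ⟨n, h⟩ else 0

/-- The ideal `(g_{q+1}, …, g_{p+q−1}) ⊆ P′`. -/
noncomputable def IdealG (p q : ℕ) (G : PowerSeries (MvPolynomial (EIdx p) ℚ)) :
    Ideal (MvPolynomial (EIdx p) ℚ) :=
  Ideal.span ((fun j => PowerSeries.coeff (R := MvPolynomial (EIdx p) ℚ) j G) ''
    Set.Icc (q + 1) (p + q - 1))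

/-- The ℚ-algebra homomorphism `P → P′/(g_{q+1},…,g_{p+q−1})`, `e_i ↦ [e_i]`, `f_j ↦ [g_j]`. -/
noncomputable def presentMap (p q : ℕ) (G : PowerSeries (MvPolynomial (EIdx p) ℚ)) :
    MvPolynomial (EFVar p q) ℚ →ₐ[ℚ] (MvPolynomial (EIdx p) ℚ ⧸ IdealG p q G) :=
  aeval (Sum.elim
    (fun i => Ideal.Quotient.mk (IdealG p q G) (X i))
    (fun j => Ideal.Quotient.mk (IdealG p q G)
      (PowerSeries.coeff (R := MvPolynomial (EIdx p) ℚ) j.1 G)))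

open PowerSeries Finset

theorem isUnit_natCast_of_ne_zero {R : Type*} [CommRing R] [Algebra ℚ R] {n : ℕ} (hn : n ≠ 0) :
    IsUnit (n : R) := by
  simpa using (IsUnit.mk0 (n : ℚ) (Nat.cast_ne_zero.mpr hn)).map (algebraMap ℚ R)

namespace PowerSeries

variable {R : Type*} [CommRing R]

theorem eq_of_pow_eq_pow {A B : R⟦X⟧} (hA : constantCoeff A = 1) (hB : constantCoeff B = 1)
    {k : ℕ} (hk : IsUnit (k : R)) (h : A ^ k = B ^ k) : A = B := by
  have hunit : IsUnit (∑ i ∈ range k, A ^ i * B ^ (k - 1 - i)) := by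
    rw [isUnit_iff_constantCoeff]
    simpa [hA, hB] using hk
  rw [← sub_eq_zero, ← hunit.mul_right_eq_zero, geom_sum₂_mul, h, sub_self]

theorem mul_derivative_pow (A : R⟦X⟧) (n : ℕ) :
    A * d⁄dX R (A ^ n) = n * A ^ n * d⁄dX R A := by
  rcases n with _ | n
  · simp
  · rw [Derivation.leibniz_pow, pow_succ _ n, nsmul_eq_mul, smul_eq_mul]
    simp only [add_tsub_cancel_right, Nat.cast_add, Nat.cast_one]
    ring

theorem derivative_mul_eq_of_pow_eq_pow {G E : R⟦X⟧} (hE : constantCoeff E = 1) {p q : ℕ}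
    (h : G ^ p = E ^ q) : p * d⁄dX R G * E = q * d⁄dX R E * G := by
  have hunit : IsUnit (E ^ q) := by
    rw [isUnit_iff_constantCoeff]
    simp [hE]
  refine hunit.mul_left_cancel ?_
  calc E ^ q * (p * d⁄dX R G * E) = E * (G * d⁄dX R (G ^ p)) := by
        rw [mul_derivative_pow, h]; ring
    _ = G * (E * d⁄dX R (E ^ q)) := by rw [h]; ring
    _ = E ^ q * (q * d⁄dX R E * G) := by rw [mul_derivative_pow]; ring

theorem coeff_X_mul_derivative (f : R⟦X⟧) (n : ℕ) :
    coeff n (X * d⁄dX R f) = n * coeff n f := by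
  rcases n with _ | n
  · simp
  · rw [coeff_succ_X_mul, coeff_derivative]
    push_cast
    ring

theorem sum_antidiagonal_coeff_eq_zero_of_pow_eq_pow {G E : R⟦X⟧} (hE : constantCoeff E = 1)
    {p q : ℕ} (h : G ^ p = E ^ q) (n : ℕ) :
    ∑ x ∈ antidiagonal n, (p * x.1 - q * x.2 : R) * (coeff x.1 G * coeff x.2 E) = 0 := by
  have key : C (p : R) * ((X * d⁄dX R G) * E) - C (q : R) * (G * (X * d⁄dX R E)) = 0 := by
    rw [map_natCast, map_natCast]
    linear_combination X * derivative_mul_eq_of_pow_eq_pow hE h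
  have hcoeff := congrArg (coeff n) key
  rw [map_sub, coeff_C_mul, coeff_C_mul, coeff_mul, coeff_mul, mul_sum, mul_sum,
    ← sum_sub_distrib, map_zero] at hcoeff
  rw [← hcoeff]
  refine sum_congr rfl fun x _ => ?_
  rw [coeff_X_mul_derivative, coeff_X_mul_derivative]
  ring

theorem span_range_coeff_le_ker_iff {S F : Type*} [CommRing S] [FunLike F R S]
    [RingHomClass F R S] (f : F) (A : R⟦X⟧) :
    Ideal.span (Set.range fun n => coeff n A) ≤ RingHom.ker f ↔ map (f : R →+* S) A = 0 := by
  simp [Ideal.span_le, Set.range_subset_iff, PowerSeries.ext_iff]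

variable [Algebra ℚ R]

theorem coeff_one_eq_zero_of_pow_eq_pow {G E : R⟦X⟧} (hE : constantCoeff E = 1)
    (hE1 : coeff 1 E = 0) {p q : ℕ} (hp : p ≠ 0) (h : G ^ p = E ^ q) : coeff 1 G = 0 := by
  have hrec := sum_antidiagonal_coeff_eq_zero_of_pow_eq_pow hE h 1
  simp [Nat.antidiagonal_succ, hE1, hE] at hrec
  exact (isUnit_natCast_of_ne_zero hp).mul_right_eq_zero.mp hrec

theorem coeff_mem_of_pow_eq_pow {G E : R⟦X⟧} (hE : constantCoeff E = 1) {p q : ℕ} (hp : p ≠ 0)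
    (hEdeg : ∀ j, p < j → coeff j E = 0) (h : G ^ p = E ^ q) {I : Ideal R}
    (hI : ∀ n, q < n → n < p + q → coeff n G ∈ I) (n : ℕ) (hn : q < n) : coeff n G ∈ I := by
  induction n using Nat.strong_induction_on with
  | _ n ih =>
    rcases lt_or_ge n (p + q) with hnpq | hnpq
    · exact hI n hn hnpq
    have hrec := sum_antidiagonal_coeff_eq_zero_of_pow_eq_pow hE h n
    rw [← add_sum_erase _ _ (mem_antidiagonal.mpr (add_zero n) : (n, 0) ∈ antidiagonal n)] at hrec
    have htail : ∑ x ∈ (antidiagonal n).erase (n, 0),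
        (p * x.1 - q * x.2 : R) * (coeff x.1 G * coeff x.2 E) ∈ I := by
      refine I.sum_mem fun x hx => ?_
      obtain ⟨hxn, hx⟩ := mem_erase.mp hx
      rw [HasAntidiagonal.mem_antidiagonal] at hx
      rcases lt_or_ge p x.2 with hj | hj
      · simp [hEdeg _ hj]
      rcases lt_or_ge q x.1 with hi | hi
      · exact I.mul_mem_left _ (I.mul_mem_right _ (ih _ (by grind) hi))
      · obtain ⟨i, j⟩ := x
        obtain ⟨rfl, rfl⟩ : i = q ∧ j = p := by grind
        simp [mul_comm]
    have hhead : ((p * n : ℕ) : R) * coeff n G ∈ I := by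
      have hhead_eq := eq_neg_of_add_eq_zero_left hrec
      simp only [Nat.cast_zero, mul_zero, sub_zero, coeff_zero_eq_constantCoeff_apply, hE,
        mul_one] at hhead_eq
      rw [Nat.cast_mul, hhead_eq]
      exact I.neg_mem htail
    have hpn : IsUnit ((p * n : ℕ) : R) := isUnit_natCast_of_ne_zero (Nat.mul_ne_zero hp (by omega))
    exact (I.unit_mul_mem_iff_mem hpn).mp hhead

end PowerSeries

section Presentation

variable {p q : ℕ} {G : PowerSeries (MvPolynomial (EIdx p) ℚ)}

theorem constantCoeff_Eser' : constantCoeff (Eser' p) = 1 := by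
  simp [Eser', ← coeff_zero_eq_constantCoeff_apply]

theorem coeff_Eser'_eq_zero {n : ℕ} (hn : n = 1 ∨ p < n) : coeff n (Eser' p) = 0 := by
  have : n ≠ 0 := by omega
  simp [Eser', this]
  omega

theorem map_comp_rename_inl_Eser' {S : Type*} [CommRing S] [Algebra ℚ S]
    (f : MvPolynomial (EFVar p q) ℚ →ₐ[ℚ] S) :
    PowerSeries.map (f.comp (rename Sum.inl) : MvPolynomial (EIdx p) ℚ →+* S) (Eser' p) =
      PowerSeries.map (f : MvPolynomial (EFVar p q) ℚ →+* S) (Eser p q) := by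
  refine PowerSeries.ext fun n => ?_
  simp only [PowerSeries.coeff_map, Eser', Eser, coeff_mk]
  split_ifs <;> simp

theorem presentMap_comp_rename_inl :
    (presentMap p q G).comp (rename Sum.inl) = Ideal.Quotient.mkₐ ℚ (IdealG p q G) := by
  ext i
  simp [presentMap]

theorem presentMap_surjective : Function.Surjective (presentMap p q G) := by
  have h := Ideal.Quotient.mkₐ_surjective ℚ (IdealG p q G)
  rw [← presentMap_comp_rename_inl, AlgHom.coe_comp] at h
  exact h.of_comp

theorem map_presentMap_Eser :
    PowerSeries.map (presentMap p q G) (Eser p q) =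
      PowerSeries.map (Ideal.Quotient.mk (IdealG p q G)) (Eser' p) := by
  rw [← map_comp_rename_inl_Eser', presentMap_comp_rename_inl]
  rfl

theorem coeff_mem_IdealG {n : ℕ} (hqn : q < n) (hnpq : n < p + q) : coeff n G ∈ IdealG p q G :=
  Ideal.subset_span ⟨n, Set.mem_Icc.mpr ⟨hqn, by omega⟩, rfl⟩

theorem map_presentMap_Fser (hp : p ≠ 0) (hG : constantCoeff G = 1) (hGp : G ^ p = Eser' p ^ q) :
    PowerSeries.map (presentMap p q G) (Fser p q) =
      PowerSeries.map (Ideal.Quotient.mk (IdealG p q G)) G := by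
  refine PowerSeries.ext fun n => ?_
  simp only [PowerSeries.coeff_map, Fser, coeff_mk]
  split_ifs with hn0 hn
  · simp [hn0, hG]
  · simp [presentMap]
  · rw [map_zero, eq_comm, Ideal.Quotient.eq_zero_iff_mem]
    rcases lt_or_ge q n with hqn | hnq
    · exact coeff_mem_of_pow_eq_pow constantCoeff_Eser' hp
        (fun _ hj => coeff_Eser'_eq_zero (.inr hj)) hGp (fun _ => coeff_mem_IdealG) n hqn
    · obtain rfl : n = 1 := by omega
      rw [coeff_one_eq_zero_of_pow_eq_pow constantCoeff_Eser' (coeff_Eser'_eq_zero (.inl rfl)) hp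
        hGp]
      exact Ideal.zero_mem _

theorem IdealO_le_ker_presentMap (hp : p ≠ 0) (hG : constantCoeff G = 1)
    (hGp : G ^ p = Eser' p ^ q) : IdealO p q ≤ RingHom.ker (presentMap p q G) := by
  rw [IdealO, span_range_coeff_le_ker_iff, map_sub, map_pow, map_pow, map_presentMap_Eser,
    map_presentMap_Fser hp hG hGp, ← map_pow, ← map_pow, hGp, sub_self]

theorem map_mk_IdealO_Eser_pow_eq_Fser_pow :
    PowerSeries.map (Ideal.Quotient.mk (IdealO p q)) (Eser p q) ^ q =
      PowerSeries.map (Ideal.Quotient.mk (IdealO p q)) (Fser p q) ^ p := by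
  have h := (span_range_coeff_le_ker_iff (Ideal.Quotient.mk (IdealO p q))
    (Eser p q ^ q - Fser p q ^ p)).mp Ideal.mk_ker.ge
  rwa [map_sub, map_pow, map_pow, sub_eq_zero] at h

theorem map_mkₐ_comp_rename_inl_eq_Fser (hp : p ≠ 0) (hG : constantCoeff G = 1)
    (hGp : G ^ p = Eser' p ^ q) :
    PowerSeries.map ((Ideal.Quotient.mkₐ ℚ (IdealO p q)).comp (rename Sum.inl)) G =
      PowerSeries.map (Ideal.Quotient.mk (IdealO p q)) (Fser p q) := by
  refine eq_of_pow_eq_pow ?_ ?_ (isUnit_natCast_of_ne_zero hp) ?_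
  · rw [← coeff_zero_eq_constantCoeff_apply, PowerSeries.coeff_map,
      coeff_zero_eq_constantCoeff_apply, hG, map_one]
  · simp [← coeff_zero_eq_constantCoeff_apply, Fser]
  · rw [← map_pow, hGp, map_pow, map_comp_rename_inl_Eser']
    exact map_mk_IdealO_Eser_pow_eq_Fser_pow

theorem exists_comp_presentMap_eq_mkₐ (hp : p ≠ 0) (hG : constantCoeff G = 1)
    (hGp : G ^ p = Eser' p ^ q) :
    ∃ χ : (MvPolynomial (EIdx p) ℚ ⧸ IdealG p q G) →ₐ[ℚ] MvPolynomial (EFVar p q) ℚ ⧸ IdealO p q,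
      χ.comp (presentMap p q G) = Ideal.Quotient.mkₐ ℚ (IdealO p q) := by
  set ψ := (Ideal.Quotient.mkₐ ℚ (IdealO p q)).comp (rename (Sum.inl : EIdx p → EFVar p q))
  have hψ (j : ℕ) : ψ (coeff j G) = Ideal.Quotient.mk (IdealO p q) (coeff j (Fser p q)) := by
    simpa [ψ] using congrArg (coeff j) (map_mkₐ_comp_rename_inl_eq_Fser hp hG hGp)
  have hle : IdealG p q G ≤ RingHom.ker ψ := by
    rw [IdealG, Ideal.span_le]
    rintro _ ⟨j, hj, rfl⟩
    rw [Set.mem_Icc] at hj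
    simp [hψ, Fser, show j ≠ 0 by omega, show ¬ j ≤ q by omega]
  refine ⟨Ideal.Quotient.liftₐ _ ψ fun _ ha => RingHom.mem_ker.mp (hle ha), ?_⟩
  ext (i | ⟨j, hj⟩) <;>
    simp only [AlgHom.comp_apply, presentMap, aeval_X, Sum.elim_inl, Sum.elim_inr]
  · change ψ (X i) = _
    simp [ψ]
  · change ψ (coeff j G) = _
    simp [hψ, Fser, hj, show j ≠ 0 by omega]

end Presentation

theorem presentation_Oqp_general (p q : ℕ) (hp : 0 < p)
    (G : PowerSeries (MvPolynomial (EIdx p) ℚ))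
    (hG1 : PowerSeries.constantCoeff (R := MvPolynomial (EIdx p) ℚ) G = 1)
    (hGp : G ^ p = Eser' p ^ q) :
    RingHom.ker (presentMap p q G) = IdealO p q ∧
      Function.Surjective (presentMap p q G) := by
  obtain ⟨χ, hχ⟩ := exists_comp_presentMap_eq_mkₐ hp.ne' hG1 hGp
  refine ⟨le_antisymm (fun x hx => ?_) (IdealO_le_ker_presentMap hp.ne' hG1 hGp),
    presentMap_surjective⟩
  rw [← Ideal.Quotient.eq_zero_iff_mem, ← Ideal.Quotient.mkₐ_eq_mk ℚ, ← hχ, AlgHom.comp_apply,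
    RingHom.mem_ker.mp hx, map_zero]

theorem presentation_Oqp (p q : ℕ) (hp : 0 < p) (hq : 0 < q) (hpq : Nat.Coprime p q)
    (G : PowerSeries (MvPolynomial (EIdx p) ℚ))
    (hG1 : PowerSeries.constantCoeff (R := MvPolynomial (EIdx p) ℚ) G = 1)
    (hGp : G ^ p = Eser' p ^ q) :
    RingHom.ker (presentMap p q G) = IdealO p q ∧
      Function.Surjective (presentMap p q G) :=
  presentation_Oqp_general p q hp G hG1 hGp
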